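/- arXiv:2403.07043 — 4 statements merged into one kernel-verified Lean document; each statement's English description precedes it below -/
import Mathlib

section
/- Let p, v ∈ ℝ² be nonzero with ‖p‖ > r > 0, and let h = ⟨p,v⟩ + ‖v‖√(‖p‖²−r²). For any γ ≥ 0, if h ≥ 0 then ⟨v,v⟩ + ⟨p,v⟩‖v‖/√(‖p‖²−r²) + γ·h ≥ 0. -/
open RealInnerProductSpace

theorem sq_add_mul_div_nonneg_of_add_mul_nonneg {x n s : ℝ} (hn : 0 ≤ n) (hs : 0 < s)
    (h : 0 ≤ x + n * s) : 0 ≤ n ^ 2 + x * n / s := by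
  have hfactor : n ^ 2 + x * n / s = n * (x + n * s) / s := by
    field_simp
    ring
  rw [hfactor]
  exact div_nonneg (mul_nonneg hn h) hs.le

theorem c3bf_bicycle_cbf_condition_general
    (p v : EuclideanSpace ℝ (Fin 2))
    (r : ℝ) (hr : 0 < r) (hpr : r < ‖p‖)
    (h : ℝ) (hh : h = ⟪p, v⟫ + ‖v‖ * Real.sqrt (‖p‖ ^ 2 - r ^ 2))
    (γ : ℝ) (hγ : 0 ≤ γ) (hsafe : 0 ≤ h) :
    0 ≤ ⟪v, v⟫ + ⟪p, v⟫ * ‖v‖ / Real.sqrt (‖p‖ ^ 2 - r ^ 2) + γ * h := by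
  have hsqrt : 0 < Real.sqrt (‖p‖ ^ 2 - r ^ 2) :=
    Real.sqrt_pos.mpr (sub_pos.mpr (pow_lt_pow_left₀ hpr hr.le two_ne_zero))
  rw [real_inner_self_eq_norm_sq]
  exact add_nonneg (sq_add_mul_div_nonneg_of_add_mul_nonneg (norm_nonneg v) hsqrt (hh ▸ hsafe))
    (mul_nonneg hγ hsafe)

theorem c3bf_bicycle_cbf_condition
    (p v : EuclideanSpace ℝ (Fin 2)) (hp : p ≠ 0) (hv : v ≠ 0)
    (r : ℝ) (hr : 0 < r) (hpr : r < ‖p‖)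
    (h : ℝ) (hh : h = ⟪p, v⟫ + ‖v‖ * Real.sqrt (‖p‖ ^ 2 - r ^ 2))
    (γ : ℝ) (hγ : 0 ≤ γ) (hsafe : 0 ≤ h) :
    0 ≤ ⟪v, v⟫ + ⟪p, v⟫ * ‖v‖ / Real.sqrt (‖p‖ ^ 2 - r ^ 2) + γ * h :=
  c3bf_bicycle_cbf_condition_general p v r hr hpr h hh γ hγ hsafe
end

section
/- Let p₀, v ∈ ℝ² with v ≠ 0 and ‖p₀‖ > r > 0. The minimum over t ≥ 0 of ‖p₀ + t·v‖ is less than r if and only if ⟨p₀, v⟩ < 0 and the distance from the origin to the line {p₀ + t·v : t ∈ ℝ} is less than r; moreover this is equivalent to ⟨p₀, v⟩ + ‖v‖·√(‖p₀‖² − r²) < 0. -/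
/-!
Expanding the square, `‖p + t • v‖² = ‖v‖² t² + 2 ⟪p, v⟫ t + ‖p‖²`. Since the start point lies
outside the disc, a point of the line inside it needs `t ⟪p, v⟫ < 0`, which for `t ≥ 0` forces
`⟪p, v⟫ < 0`, and conversely when `⟪p, v⟫ < 0` only forward times can enter the disc. For the
C3BF form, `‖p + t • v‖ < r` is the quadratic inequality `‖v‖² t² + 2 ⟪p, v⟫ t + (‖p‖² - r²) < 0`,
which has a solution `t ≥ 0` exactly when `⟪p, v⟫ < -‖v‖ √(‖p‖² - r²)` (AM-GM on the two outer
terms).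
-/

open RealInnerProductSpace

lemma exists_nonneg_quadratic_neg_iff {α b c : ℝ} (hα : 0 ≤ α) (hc : 0 < c) :
    (∃ t, 0 ≤ t ∧ α ^ 2 * t ^ 2 + 2 * b * t + c < 0) ↔ b + α * √c < 0 := by
  have hs : 0 < √c := Real.sqrt_pos.mpr hc
  have hsc : √c ^ 2 = c := Real.sq_sqrt hc.le
  constructor
  · rintro ⟨t, ht, hq⟩
    have ht' : 0 < t := ht.lt_of_ne (by rintro rfl; linarith)
    nlinarith [sq_nonneg (α * t - √c)]
  · intro h
    have hb : b < 0 := by nlinarith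
    -- `t = c / (-b)` makes the linear term cancel twice the constant term
    refine ⟨c / -b, div_nonneg hc.le (neg_nonneg.mpr hb.le), ?_⟩
    have hαs : (α * √c) ^ 2 < b ^ 2 := by nlinarith [mul_nonneg hα hs.le]
    have hval : α ^ 2 * (c / -b) ^ 2 + 2 * b * (c / -b) + c
        = c * ((α * √c) ^ 2 - b ^ 2) / b ^ 2 := by
      rw [mul_pow, hsc]
      field_simp [hb.ne]
      ring
    rw [hval]
    exact div_neg_of_neg_of_pos (mul_neg_of_pos_of_neg hc (by linarith))
      (sq_pos_of_neg hb)

variable {E : Type*} [NormedAddCommGroup E] [InnerProductSpace ℝ E]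

lemma norm_add_smul_sq (p v : E) (t : ℝ) :
    ‖p + t • v‖ ^ 2 = ‖v‖ ^ 2 * t ^ 2 + 2 * ⟪p, v⟫ * t + ‖p‖ ^ 2 := by
  rw [norm_add_sq_real, real_inner_smul_right, norm_smul, Real.norm_eq_abs, mul_pow, sq_abs]
  ring

lemma norm_le_norm_add_smul_of_nonneg {p v : E} {t : ℝ} (h : 0 ≤ t * ⟪p, v⟫) :
    ‖p‖ ≤ ‖p + t • v‖ := by
  refine le_of_sq_le_sq ?_ (norm_nonneg _)
  rw [norm_add_smul_sq]
  nlinarith [sq_nonneg (‖v‖ * t)]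

lemma exists_nonneg_norm_add_smul_lt_iff {p v : E} {r : ℝ} (hr : r ≤ ‖p‖) :
    (∃ t : ℝ, 0 ≤ t ∧ ‖p + t • v‖ < r) ↔ ⟪p, v⟫ < 0 ∧ ∃ t : ℝ, ‖p + t • v‖ < r := by
  have approach {t : ℝ} (ht : ‖p + t • v‖ < r) : t * ⟪p, v⟫ < 0 :=
    not_le.mp fun h => (norm_le_norm_add_smul_of_nonneg h).not_gt (ht.trans_le hr)
  constructor
  · rintro ⟨t, ht, hlt⟩
    exact ⟨neg_of_mul_neg_right (approach hlt) ht, t, hlt⟩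
  · rintro ⟨hpv, t, hlt⟩
    exact ⟨t, (pos_of_mul_neg_left (approach hlt) hpv.le).le, hlt⟩

lemma sInf_range_norm_add_smul_lt_iff {p v : E} {r : ℝ} :
    sInf (Set.range fun t : ℝ => ‖p + t • v‖) < r ↔ ∃ t : ℝ, ‖p + t • v‖ < r := by
  rw [csInf_lt_iff ⟨0, by rintro _ ⟨t, rfl⟩; positivity⟩ (Set.range_nonempty _),
    Set.exists_range_iff]

lemma exists_nonneg_norm_add_smul_lt_iff_inner_add_lt {p v : E} {r : ℝ} (hr : 0 ≤ r)
    (hrp : r < ‖p‖) :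
    (∃ t : ℝ, 0 ≤ t ∧ ‖p + t • v‖ < r) ↔ ⟪p, v⟫ + ‖v‖ * √(‖p‖ ^ 2 - r ^ 2) < 0 := by
  have hquad (t : ℝ) :
      ‖p + t • v‖ < r ↔ ‖v‖ ^ 2 * t ^ 2 + 2 * ⟪p, v⟫ * t + (‖p‖ ^ 2 - r ^ 2) < 0 := by
    rw [← sq_lt_sq₀ (norm_nonneg _) hr, norm_add_smul_sq, ← sub_neg]
    ring_nf
  simp_rw [hquad]
  exact exists_nonneg_quadratic_neg_iff (norm_nonneg v) (by nlinarith)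

theorem collision_cone_characterization_general
    (p₀ v : EuclideanSpace ℝ (Fin 2))
    (r : ℝ) (hr : 0 < r) (hpr : r < ‖p₀‖) :
    ((∃ t : ℝ, 0 ≤ t ∧ ‖p₀ + t • v‖ < r) ↔
      (⟪p₀, v⟫ < 0 ∧ sInf (Set.range fun t : ℝ => ‖p₀ + t • v‖) < r)) ∧
    ((∃ t : ℝ, 0 ≤ t ∧ ‖p₀ + t • v‖ < r) ↔
      ⟪p₀, v⟫ + ‖v‖ * Real.sqrt (‖p₀‖ ^ 2 - r ^ 2) < 0) := by
  rw [sInf_range_norm_add_smul_lt_iff]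
  exact ⟨exists_nonneg_norm_add_smul_lt_iff hpr.le,
    exists_nonneg_norm_add_smul_lt_iff_inner_add_lt hr.le hpr⟩

/-- Collision-cone characterization: collision (minimum forward distance below `r`) occurs
iff the obstacle is approaching (`⟪p₀,v⟫ < 0`) and the line misses the origin by less
than `r`; and this is equivalent to negativity of the C3BF candidate. -/
theorem collision_cone_characterization
    (p₀ v : EuclideanSpace ℝ (Fin 2)) (hv : v ≠ 0)
    (r : ℝ) (hr : 0 < r) (hpr : r < ‖p₀‖) :
    ((∃ t : ℝ, 0 ≤ t ∧ ‖p₀ + t • v‖ < r) ↔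
      (⟪p₀, v⟫ < 0 ∧ sInf (Set.range fun t : ℝ => ‖p₀ + t • v‖) < r)) ∧
    ((∃ t : ℝ, 0 ≤ t ∧ ‖p₀ + t • v‖ < r) ↔
      ⟪p₀, v⟫ + ‖v‖ * Real.sqrt (‖p₀‖ ^ 2 - r ^ 2) < 0) :=
  collision_cone_characterization_general p₀ v r hr hpr
end

section
/- For nonzero p, v ∈ ℝ² with ‖p‖ > r > 0 and a constant γ with 0 < γ < ‖v‖, define h_HO = ⟨p,v⟩ + γ·√(‖p‖² − r²) and h_C3BF = ⟨p,v⟩ + ‖v‖·√(‖p‖² − r²). Then h_HO ≥ 0 implies h_C3BF ≥ 0, and the implication is strict: there exist p, v with h_C3BF ≥ 0 but h_HO < 0. -/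
/-!
Since `√(‖p‖² - r²) ≥ 0`, the barrier `⟪p, v⟫ + k √(‖p‖² - r²)` is monotone in the coefficient `k`,
so replacing `γ` by the larger `‖v‖` preserves nonnegativity. For strictness take orthonormal
`e, f`, `p = r (e + f)` and `v = -2γ e`: then `√(‖p‖² - r²) = r` and `⟪p, v⟫ = -2rγ`, so the
barrier equals `r (k - 2γ)`, which vanishes at `k = ‖v‖ = 2γ` and is negative at `k = γ`.
-/

open RealInnerProductSpace

section ConeBarrier

variable {E : Type*} [NormedAddCommGroup E] [InnerProductSpace ℝ E]

noncomputable def coneBarrier (k r : ℝ) (p v : E) : ℝ :=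
  ⟪p, v⟫ + k * √(‖p‖ ^ 2 - r ^ 2)

theorem coneBarrier_mono {k k' : ℝ} (r : ℝ) (p v : E) (hk : k ≤ k') :
    coneBarrier k r p v ≤ coneBarrier k' r p v := by
  unfold coneBarrier
  gcongr

variable {e f : E} (he : ‖e‖ = 1) (hf : ‖f‖ = 1) (hef : ⟪e, f⟫ = 0)
include he hf hef

theorem norm_smul_add_sq_of_orthonormal (r : ℝ) : ‖r • (e + f)‖ ^ 2 = 2 * r ^ 2 := by
  rw [norm_smul, mul_pow, norm_add_sq_real, he, hf, hef, Real.norm_eq_abs, sq_abs]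
  ring

theorem coneBarrier_smul_add_smul_of_orthonormal (k c : ℝ) {r : ℝ} (hr : 0 ≤ r) :
    coneBarrier k r (r • (e + f)) ((-c) • e) = r * (k - c) := by
  have hsqrt : √(‖r • (e + f)‖ ^ 2 - r ^ 2) = r := by
    rw [norm_smul_add_sq_of_orthonormal he hf hef, two_mul, add_sub_cancel_right,
      Real.sqrt_sq hr]
  have hinner : ⟪r • (e + f), (-c) • e⟫ = -(r * c) := by
    rw [real_inner_smul_left, real_inner_smul_right, inner_add_left,
      real_inner_self_eq_norm_sq, he, real_inner_comm, hef]
    ring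
  rw [coneBarrier, hsqrt, hinner]
  ring

end ConeBarrier

/-- The HO-CBF safe set is a strict subset of the C3BF safe set when `γ < ‖v‖`. -/
theorem hocbf_more_conservative_than_c3bf (r γ : ℝ) (hr : 0 < r) (hγ : 0 < γ) :
    (∀ p v : EuclideanSpace ℝ (Fin 2), p ≠ 0 → v ≠ 0 → r < ‖p‖ → γ < ‖v‖ →
      0 ≤ ⟪p, v⟫ + γ * Real.sqrt (‖p‖ ^ 2 - r ^ 2) →
      0 ≤ ⟪p, v⟫ + ‖v‖ * Real.sqrt (‖p‖ ^ 2 - r ^ 2)) ∧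
    (∃ p v : EuclideanSpace ℝ (Fin 2), p ≠ 0 ∧ v ≠ 0 ∧ r < ‖p‖ ∧ γ < ‖v‖ ∧
      0 ≤ ⟪p, v⟫ + ‖v‖ * Real.sqrt (‖p‖ ^ 2 - r ^ 2) ∧
      ⟪p, v⟫ + γ * Real.sqrt (‖p‖ ^ 2 - r ^ 2) < 0) := by
  refine ⟨fun p v _ _ _ hγv h => h.trans (coneBarrier_mono r p v hγv.le), ?_⟩
  have hb := (EuclideanSpace.basisFun (Fin 2) ℝ).orthonormal
  set e := EuclideanSpace.basisFun (Fin 2) ℝ 0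
  set f := EuclideanSpace.basisFun (Fin 2) ℝ 1
  have hp := norm_smul_add_sq_of_orthonormal (hb.1 0) (hb.1 1) (hb.2 zero_ne_one) r
  have hv : ‖(-(2 * γ)) • e‖ = 2 * γ := by
    rw [norm_smul, hb.1 0, mul_one, norm_neg, Real.norm_of_nonneg (by positivity)]
  have hbarrier (k : ℝ) := coneBarrier_smul_add_smul_of_orthonormal (hb.1 0) (hb.1 1)
    (hb.2 zero_ne_one) k (2 * γ) hr.le
  refine ⟨r • (e + f), (-(2 * γ)) • e, ?_, ?_, ?_, ?_, ?_, ?_⟩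
  · rw [← norm_ne_zero_iff, ← pow_ne_zero_iff two_ne_zero, hp]
    positivity
  · rw [← norm_ne_zero_iff, hv]
    positivity
  · nlinarith [norm_nonneg (r • (e + f))]
  · linarith
  · change 0 ≤ coneBarrier _ r _ _
    rw [hbarrier, hv, sub_self, mul_zero]
  · change coneBarrier γ r _ _ < 0
    rw [hbarrier]
    exact mul_neg_of_pos_of_neg hr (by linarith)
end

section
/- For the double integrator ṗ = v, v̇ = u in ℝ², the collision-cone candidate h(p,v) = ⟨p_rel, v_rel⟩ + ‖v_rel‖√(‖p_rel‖² − r²), with p_rel = c − p (obstacle at c with constant velocity ċ) and v_rel = ċ − v, satisfies L_g h = −(p_rel + (√(‖p_rel‖² − r²)/‖v_rel‖)·v_rel)ᵀ, which is nonzero wherever ‖p_rel‖ > r and v_rel ≠ 0; hence h is a valid CBF there. -/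
open RealInnerProductSpace

/-!
Away from `v_rel = 0` the candidate is an affine function of `w` plus `√(‖p_rel‖² − r²)` times
`‖ċ − w‖`, whose gradient at `v` is `-v_rel / ‖v_rel‖`. If the gradient vanished, `p_rel` would be a
multiple of `v_rel` of length at most `√(‖p_rel‖² − r²) < ‖p_rel‖`.
-/

section InnerProductSpace

variable {F : Type*} [NormedAddCommGroup F] [InnerProductSpace ℝ F]

theorem hasStrictFDerivAt_norm {x : F} (hx : x ≠ 0) :
    HasStrictFDerivAt (‖·‖) (‖x‖⁻¹ • innerSL ℝ x) x := by
  have h := (hasStrictFDerivAt_norm_sq x).sqrt (by positivity)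
  simp only [Real.sqrt_sq (norm_nonneg _)] at h
  convert h using 1
  rw [← Nat.cast_smul_eq_nsmul ℝ, smul_smul]
  congr 1
  push_cast
  field_simp

theorem hasGradientAt_inner_sub_add_norm_sub_mul [CompleteSpace F] (a c v : F) (s : ℝ)
    (hv : c - v ≠ 0) :
    HasGradientAt (fun w => ⟪a, c - w⟫ + ‖c - w‖ * s) (-(a + (s / ‖c - v‖) • (c - v))) v := by
  have hsub : HasFDerivAt (fun w : F => c - w) (-ContinuousLinearMap.id ℝ F) v := by
    simpa using (hasFDerivAt_id v).const_sub c
  have hinner := (innerSL ℝ a).hasFDerivAt.comp v hsub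
  have hnorm := (hasStrictFDerivAt_norm hv).hasFDerivAt.comp v hsub
  rw [hasGradientAt_iff_hasFDerivAt]
  refine (hinner.add (hnorm.mul_const s)).congr_fderiv ?_
  ext d
  simp only [ContinuousLinearMap.comp_neg, ContinuousLinearMap.comp_id, smul_neg, add_apply,
    neg_apply, coe_innerSL_apply, smul_apply, smul_eq_mul, neg_add_rev, map_add, map_neg,
    map_smul, InnerProductSpace.toDual_apply_apply]
  ring

end InnerProductSpace

theorem add_smul_ne_zero_of_lt_norm {E : Type*} [NormedAddCommGroup E] [NormedSpace ℝ E]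
    {a : E} {r : ℝ} (hr : 0 < r) (hra : r < ‖a‖) (x : E) :
    a + (Real.sqrt (‖a‖ ^ 2 - r ^ 2) / ‖x‖) • x ≠ 0 := by
  set s := Real.sqrt (‖a‖ ^ 2 - r ^ 2)
  intro h
  have hle : ‖a‖ ≤ s :=
    calc ‖a‖ = ‖(s / ‖x‖) • x‖ := by rw [eq_neg_of_add_eq_zero_left h, norm_neg]
      _ = s * (‖x‖ / ‖x‖) := by rw [norm_smul, Real.norm_of_nonneg (by positivity)]; ring
      _ ≤ s := mul_le_of_le_one_right (Real.sqrt_nonneg _) (div_self_le_one _)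
  have hs : s ^ 2 = ‖a‖ ^ 2 - r ^ 2 := Real.sq_sqrt (by nlinarith)
  nlinarith

/-- For the double integrator, the input-direction gradient of the C3BF candidate
(its `v`-gradient) is `-(p_rel + (√(‖p_rel‖²−r²)/‖v_rel‖)•v_rel)`, which is nonzero
whenever `‖p_rel‖ > r` and `v_rel ≠ 0`; hence `L_g h ≠ 0`. -/
theorem c3bf_double_integrator_Lgh
    (c cdot p v : EuclideanSpace ℝ (Fin 2)) (r : ℝ) (hr : 0 < r)
    (hpr : r < ‖c - p‖) (hvrel : cdot - v ≠ 0) :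
    HasGradientAt (fun w : EuclideanSpace ℝ (Fin 2) =>
        ⟪c - p, cdot - w⟫ + ‖cdot - w‖ * Real.sqrt (‖c - p‖ ^ 2 - r ^ 2))
      (-((c - p) + (Real.sqrt (‖c - p‖ ^ 2 - r ^ 2) / ‖cdot - v‖) • (cdot - v))) v ∧
    -((c - p) + (Real.sqrt (‖c - p‖ ^ 2 - r ^ 2) / ‖cdot - v‖) • (cdot - v)) ≠ 0 :=
  ⟨hasGradientAt_inner_sub_add_norm_sub_mul _ _ _ _ hvrel,
    neg_ne_zero.mpr (add_smul_ne_zero_of_lt_norm hr hpr _)⟩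
end
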